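/- arXiv:1104.4241 — 5 statements merged into one kernel-verified Lean document; each statement's English description precedes it below -/
import Mathlib

section
/- For every probability measure ρ on the interval [-1,1], the expected absolute difference of two independent samples satisfies ∫∫ |x−y| dρ(x) dρ(y) ≤ 1. -/
open MeasureTheory

/-
On `[-1, 1]` one has `|x - y| ≤ 1 - x y`, since `1 - x y ∓ (x - y) = (1 ± y)(1 ∓ x) ≥ 0`.
Integrating against `ρ ⊗ ρ` gives `Q(ρ) ≤ 1 - m²` with `m` the mean of `ρ`.
As all integrands are nonnegative, only the upper bounds need to be integrable.
-/

lemma abs_sub_le_one_sub_mul {x y : ℝ} (hx : x ∈ Set.Icc (-1 : ℝ) 1)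
    (hy : y ∈ Set.Icc (-1 : ℝ) 1) : |x - y| ≤ 1 - x * y := by
  obtain ⟨hx₁, hx₂⟩ := hx
  obtain ⟨hy₁, hy₂⟩ := hy
  rw [abs_le]
  constructor <;> nlinarith [mul_nonneg (sub_nonneg.2 hx₂) (neg_le_iff_add_nonneg.1 hy₁),
    mul_nonneg (sub_nonneg.2 hy₂) (neg_le_iff_add_nonneg.1 hx₁)]

lemma integrable_id_of_ae_mem_Icc {ρ : Measure ℝ} [IsFiniteMeasure ρ] {a b : ℝ}
    (h : ∀ᵐ x ∂ρ, x ∈ Set.Icc a b) : Integrable (fun x => x) ρ :=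
  .of_bound measurable_id.aestronglyMeasurable (max |a| |b|) <| by
    filter_upwards [h] with x hx using abs_le_max_abs_abs hx.1 hx.2

lemma integral_one_sub_const_mul {ρ : Measure ℝ} [IsProbabilityMeasure ρ]
    (hρ : Integrable (fun x => x) ρ) (c : ℝ) :
    ∫ x, (1 - c * x) ∂ρ = 1 - c * ∫ x, x ∂ρ := by
  rw [integral_sub (integrable_const 1) (hρ.const_mul c), integral_const_mul, integral_const,
    probReal_univ, one_smul]

theorem stmt_0 (ρ : Measure ℝ) [IsProbabilityMeasure ρ]
    (hsupp : ρ (Set.Icc (-1 : ℝ) 1) = 1) :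
    ∫ x, ∫ y, |x - y| ∂ρ ∂ρ ≤ 1 := by
  have hae : ∀ᵐ x ∂ρ, x ∈ Set.Icc (-1 : ℝ) 1 :=
    (mem_ae_iff_prob_eq_one measurableSet_Icc).2 hsupp
  have hid := integrable_id_of_ae_mem_Icc hae
  set m := ∫ x, x ∂ρ
  have hinner : ∀ᵐ x ∂ρ, ∫ y, |x - y| ∂ρ ≤ 1 - m * x := by
    filter_upwards [hae] with x hx
    rw [mul_comm, ← integral_one_sub_const_mul hid]
    refine integral_mono_of_nonneg (.of_forall fun _ => abs_nonneg _)
      ((integrable_const 1).sub (hid.const_mul x)) ?_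
    filter_upwards [hae] with y hy using abs_sub_le_one_sub_mul hx hy
  calc ∫ x, ∫ y, |x - y| ∂ρ ∂ρ ≤ ∫ x, (1 - m * x) ∂ρ :=
        integral_mono_of_nonneg (.of_forall fun _ => integral_nonneg fun _ => abs_nonneg _)
          ((integrable_const 1).sub (hid.const_mul m)) hinner
    _ = 1 - m * m := integral_one_sub_const_mul hid m
    _ ≤ 1 := sub_le_self 1 (mul_self_nonneg m)
end

section
/- For every probability measure ρ on the interval [−D, D] with D ≥ 0, one has ∫∫ |x−y| dρ(x) dρ(y) ≤ D, and in particular the supremum over all such probability measures of ∫∫ |x−y| dρ(x) dρ(y) equals D. -/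
open MeasureTheory Set
open scoped ENNReal

/-!
On `[-D, D]` with `D > 0` one has `|x - y| ≤ D - x y / D`; integrating against `ρ ⊗ ρ` gives
`∫∫ |x - y| ≤ D - m² / D ≤ D`, where `m` is the mean of `ρ`. Equality holds for the measure
with mass `1/2` at each of `±D`, so the supremum is attained.
-/

/-- For `D > 0` and `x ≥ y` this is `0 ≤ (D - x) * (D + y)`. -/
lemma abs_sub_le_sub_mul_div {D x y : ℝ} (hD : 0 < D) (hx : x ∈ Icc (-D) D)
    (hy : y ∈ Icc (-D) D) : |x - y| ≤ D - x * y / D := by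
  rw [le_sub_comm, div_le_iff₀ hD]
  obtain ⟨hx₁, hx₂⟩ := hx
  obtain ⟨hy₁, hy₂⟩ := hy
  rcases abs_cases (x - y) with ⟨h, -⟩ | ⟨h, -⟩ <;> rw [h] <;> nlinarith

section Icc

variable {D : ℝ} {ρ : Measure ℝ} [IsProbabilityMeasure ρ]

lemma integrable_id_of_ae_mem_Icc_s2 (h : ∀ᵐ x ∂ρ, x ∈ Icc (-D) D) : Integrable (fun x ↦ x) ρ :=
  .of_bound aestronglyMeasurable_id D (h.mono fun _ hx ↦ abs_le.2 hx)

lemma integral_sub_mul_div (hρ : Integrable (fun x ↦ x) ρ) (c : ℝ) :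
    ∫ y, (D - c * y / D) ∂ρ = D - c * (∫ y, y ∂ρ) / D := by
  rw [integral_sub (integrable_const D) ((hρ.const_mul c).div_const D), integral_const,
    integral_div, integral_const_mul]
  simp

theorem integral_integral_abs_sub_le_sub_sq_div (hD : 0 < D)
    (h : ∀ᵐ x ∂ρ, x ∈ Icc (-D) D) :
    ∫ x, ∫ y, |x - y| ∂ρ ∂ρ ≤ D - (∫ x, x ∂ρ) ^ 2 / D := by
  have hρ := integrable_id_of_ae_mem_Icc_s2 h
  set m := ∫ x, x ∂ρ
  have inner (x : ℝ) (hx : x ∈ Icc (-D) D) : ∫ y, |x - y| ∂ρ ≤ D - x * m / D := by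
    rw [← integral_sub_mul_div hρ]
    refine integral_mono_of_nonneg (.of_forall fun _ ↦ abs_nonneg _)
      ((integrable_const D).sub ((hρ.const_mul x).div_const D)) ?_
    filter_upwards [h] with y hy using abs_sub_le_sub_mul_div hD hx hy
  calc ∫ x, ∫ y, |x - y| ∂ρ ∂ρ ≤ ∫ x, (D - m * x / D) ∂ρ := by
        refine integral_mono_of_nonneg
          (.of_forall fun _ ↦ integral_nonneg fun _ ↦ abs_nonneg _)
          ((integrable_const D).sub ((hρ.const_mul m).div_const D)) ?_
        filter_upwards [h] with x hx
        rw [mul_comm m]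
        exact inner x hx
    _ = D - m ^ 2 / D := by rw [integral_sub_mul_div hρ, sq]

theorem integral_integral_abs_sub_le (hD : 0 ≤ D) (h : ∀ᵐ x ∂ρ, x ∈ Icc (-D) D) :
    ∫ x, ∫ y, |x - y| ∂ρ ∂ρ ≤ D := by
  -- passing to `D' > D` avoids dividing by `D = 0`
  refine le_of_forall_gt_imp_ge_of_dense fun D' hD' ↦ ?_
  have h' : ∀ᵐ x ∂ρ, x ∈ Icc (-D') D' :=
    h.mono fun _ hx ↦ Icc_subset_Icc (neg_le_neg hD'.le) hD'.le hx
  have hD'pos := hD.trans_lt hD'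
  calc _ ≤ D' - (∫ x, x ∂ρ) ^ 2 / D' := integral_integral_abs_sub_le_sub_sq_div hD'pos h'
    _ ≤ D' := sub_le_self _ (by positivity)

end Icc

noncomputable def twoPointMeasure (D : ℝ) : Measure ℝ :=
  (2⁻¹ : ℝ≥0∞) • (Measure.dirac (-D) + Measure.dirac D)

instance (D : ℝ) : IsProbabilityMeasure (twoPointMeasure D) :=
  ⟨by simp [twoPointMeasure, ENNReal.inv_two_add_inv_two]⟩

lemma integral_twoPointMeasure (D : ℝ) (f : ℝ → ℝ) :
    ∫ x, f x ∂twoPointMeasure D = (f (-D) + f D) / 2 := by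
  rw [twoPointMeasure, integral_smul_measure,
    integral_add_measure (integrable_dirac enorm_lt_top) (integrable_dirac enorm_lt_top),
    integral_dirac, integral_dirac]
  simp [div_eq_inv_mul]

lemma twoPointMeasure_Icc {D : ℝ} (hD : 0 ≤ D) : twoPointMeasure D (Icc (-D) D) = 1 := by
  simp [twoPointMeasure, hD, ENNReal.inv_two_add_inv_two]

lemma integral_integral_abs_sub_twoPointMeasure {D : ℝ} (hD : 0 ≤ D) :
    ∫ x, ∫ y, |x - y| ∂twoPointMeasure D ∂twoPointMeasure D = D := by
  simp only [integral_twoPointMeasure, sub_neg_eq_add, neg_add_cancel, sub_self, abs_zero]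
  rw [← neg_add', abs_neg, abs_of_nonneg (by linarith)]
  ring

theorem stmt_2 (D : ℝ) (hD : 0 ≤ D) :
    (∀ ρ : Measure ℝ, IsProbabilityMeasure ρ → ρ (Set.Icc (-D) D) = 1 →
      ∫ x, ∫ y, |x - y| ∂ρ ∂ρ ≤ D) ∧
    sSup {r : ℝ | ∃ ρ : Measure ℝ, IsProbabilityMeasure ρ ∧ ρ (Set.Icc (-D) D) = 1 ∧
      r = ∫ x, ∫ y, |x - y| ∂ρ ∂ρ} = D := by
  have bound (ρ : Measure ℝ) (_ : IsProbabilityMeasure ρ) (hρ : ρ (Icc (-D) D) = 1) :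
      ∫ x, ∫ y, |x - y| ∂ρ ∂ρ ≤ D :=
    integral_integral_abs_sub_le hD <|
      (ae_mem_iff_measure_eq measurableSet_Icc.nullMeasurableSet).2 (by simp [hρ])
  refine ⟨bound, IsGreatest.csSup_eq ⟨?_, ?_⟩⟩
  · exact ⟨twoPointMeasure D, inferInstance, twoPointMeasure_Icc hD,
      (integral_integral_abs_sub_twoPointMeasure hD).symm⟩
  · rintro _ ⟨ρ, hprob, hρ, rfl⟩
    exact bound ρ hprob hρ
end

section
/- Let μ₀, μ₁ be probability measures on a measurable space with densities h₀, h₁ with respect to a common measure α, where h_t = e^{u_t} 1_A / α(e^{u_t} 1_A) for u_t = t u₁ + (1−t) u₀ with bounded measurable u₀, u₁ and a measurable set A with α(e^{u₀}1_A), α(e^{u₁}1_A) > 0. Then the total variation distance satisfies 2‖μ₀ − μ₁‖_TV ≤ ∫₀¹ dt ∫ λ_t(dσ) | f(σ) − ∫ λ_t(dτ) f(τ) |, where f = u₁ − u₀ and λ_t(dσ) = h_t(σ) α(dσ). -/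
/-!
Along the path `u_t`, the density `h_t = e^{u_t} 1_A / Z_t` has `t`-derivative
`h_t (f - λ_t f)`, because `Z_t' = ∫_A f e^{u_t} dα`. The fundamental theorem of calculus gives
`|h₁ - h₀| ≤ ∫₀¹ |∂ₜ h_t| dt` pointwise; integrating against `α` and exchanging the integrals
(legitimate since `Z_t` is bounded below on `[0, 1]`, so `∂ₜ h_t` is bounded) yields the claim, as
`∫ |∂ₜ h_t| dα = ∫ |f - λ_t f| dλ_t`.
-/

open MeasureTheory Real Set Function ProbabilityTheory

theorem integral_abs_sub_le_intervalIntegral_of_hasDerivAt {S : Type*} [MeasurableSpace S]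
    {μ : Measure S} [IsFiniteMeasure μ] {F F' : ℝ → S → ℝ} {a b K : ℝ} (hab : a ≤ b)
    (hF : ∀ s, ∀ t ∈ Icc a b, HasDerivAt (F · s) (F' t s) t)
    (hF'_meas : Measurable (uncurry F')) (hF'_le : ∀ t ∈ Icc a b, ∀ s, |F' t s| ≤ K) :
    ∫ s, |F b s - F a s| ∂μ ≤ ∫ t in a..b, ∫ s, |F' t s| ∂μ := by
  have hint : Integrable (uncurry fun t s => |F' t s|) ((volume.restrict (Ioc a b)).prod μ) := by
    refine .of_bound hF'_meas.abs.aestronglyMeasurable K ?_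
    filter_upwards [Measure.quasiMeasurePreserving_fst.ae (ae_restrict_mem measurableSet_Ioc)]
      with p hp
    simpa [uncurry] using hF'_le p.1 (Ioc_subset_Icc_self hp) p.2
  rw [intervalIntegral_integral_swap (by rwa [uIoc_of_le hab])]
  refine integral_mono_of_nonneg (.of_forall fun s => abs_nonneg _)
    ?_ (.of_forall fun s => ?_)
  · simpa [intervalIntegral.integral_of_le hab] using hint.integral_prod_right
  have hF's : IntervalIntegrable (F' · s) volume a b := by
    refine (intervalIntegrable_iff_integrableOn_Ioc_of_le hab).2 <| Measure.integrableOn_of_bounded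
      (M := K) (by simp) (hF'_meas.comp measurable_prodMk_right).aestronglyMeasurable ?_
    filter_upwards [ae_restrict_mem measurableSet_Ioc] with t ht
    exact hF'_le t (Ioc_subset_Icc_self ht) s
  calc |F b s - F a s| = |∫ t in a..b, F' t s| := by
        rw [intervalIntegral.integral_eq_sub_of_hasDerivAt (fun t ht => hF s t ?_) hF's]
        rwa [uIcc_of_le hab] at ht
    _ ≤ ∫ t in a..b, |F' t s| := intervalIntegral.abs_integral_le_integral_abs hab

theorem hasDerivAt_integral_exp_add_mul {S : Type*} [MeasurableSpace S] {μ : Measure S}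
    {u f : S → ℝ} {B : ℝ} (hu : Integrable (fun s => exp (u s)) μ) (hf : Measurable f)
    (hfB : ∀ s, |f s| ≤ B) (t : ℝ) :
    HasDerivAt (fun t => ∫ s, exp (u s + t * f s) ∂μ) (∫ s, f s * exp (u s + t * f s) ∂μ) t := by
  -- the integral is the moment generating function of `f` under `exp u • μ`
  set ν := μ.withDensity fun s => ENNReal.ofReal (exp (u s))
  have : IsFiniteMeasure ν := isFiniteMeasure_withDensity_ofReal hu.2
  have hν (g : S → ℝ) : ∫ s, g s ∂ν = ∫ s, exp (u s) * g s ∂μ := by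
    rw [integral_withDensity_eq_integral_toReal_smul₀ hu.1.aemeasurable.ennreal_ofReal
      (.of_forall fun _ => ENNReal.ofReal_lt_top)]
    simp [ENNReal.toReal_ofReal (exp_nonneg _)]
  have hexp : integrableExpSet f ν = univ := eq_univ_of_forall fun t =>
    integrable_exp_mul_of_mem_Icc hf.aemeasurable (.of_forall fun s => abs_le.1 (hfB s))
  have hmgf : (fun t => ∫ s, exp (u s + t * f s) ∂μ) = mgf f ν := by
    ext t
    simp only [mgf, hν, exp_add]
  rw [hmgf]
  convert hasDerivAt_mgf (X := f) (μ := ν) (t := t) (by simp [hexp]) using 1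
  rw [hν]
  simp only [exp_add, mul_left_comm]

theorem abs_mul_add_one_sub_mul_le {x y t C : ℝ} (hx : |x| ≤ C) (hy : |y| ≤ C)
    (ht : t ∈ Icc (0 : ℝ) 1) : |t * y + (1 - t) * x| ≤ C := by
  obtain ⟨hx, hx'⟩ := abs_le.1 hx
  obtain ⟨hy, hy'⟩ := abs_le.1 hy
  exact abs_le.2 ⟨by nlinarith [ht.1, ht.2], by nlinarith [ht.1, ht.2]⟩

noncomputable section

variable {S : Type*} [MeasurableSpace S] (α : Measure S) (A : Set S) (u₀ u₁ : S → ℝ)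

def gibbsPartition (t : ℝ) : ℝ := ∫ s in A, exp (t * u₁ s + (1 - t) * u₀ s) ∂α

def gibbsDensity (t : ℝ) (s : S) : ℝ :=
  A.indicator (fun s' => exp (t * u₁ s' + (1 - t) * u₀ s')) s / gibbsPartition α A u₀ u₁ t

def gibbsMean (t : ℝ) : ℝ :=
  (∫ s in A, (u₁ s - u₀ s) * exp (t * u₁ s + (1 - t) * u₀ s) ∂α) / gibbsPartition α A u₀ u₁ t

def gibbsMeasure (t : ℝ) : Measure S :=
  α.withDensity fun s => ENNReal.ofReal (gibbsDensity α A u₀ u₁ t s)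

variable {α A u₀ u₁}

theorem gibbsPartition_nonneg (t : ℝ) : 0 ≤ gibbsPartition α A u₀ u₁ t :=
  integral_nonneg fun _ => (exp_pos _).le

theorem gibbsDensity_nonneg (t : ℝ) (s : S) : 0 ≤ gibbsDensity α A u₀ u₁ t s :=
  div_nonneg (indicator_nonneg (fun _ _ => (exp_pos _).le) s) (gibbsPartition_nonneg t)

theorem integrableOn_exp_interpolate [IsFiniteMeasure α] (hm₀ : Measurable u₀)
    (hm₁ : Measurable u₁) {C : ℝ} (hb₀ : ∀ s, |u₀ s| ≤ C) (hb₁ : ∀ s, |u₁ s| ≤ C) {t : ℝ}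
    (ht : t ∈ Icc (0 : ℝ) 1) : IntegrableOn (fun s => exp (t * u₁ s + (1 - t) * u₀ s)) A α := by
  refine Integrable.of_bound (by fun_prop) (exp C) (.of_forall fun s => ?_)
  rw [norm_of_nonneg (exp_pos _).le, exp_le_exp]
  exact (le_abs_self _).trans (abs_mul_add_one_sub_mul_le (hb₀ s) (hb₁ s) ht)

theorem hasDerivAt_gibbsPartition [IsFiniteMeasure α] (hm₀ : Measurable u₀)
    (hm₁ : Measurable u₁) {C : ℝ} (hb₀ : ∀ s, |u₀ s| ≤ C) (hb₁ : ∀ s, |u₁ s| ≤ C) (t : ℝ) :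
    HasDerivAt (gibbsPartition α A u₀ u₁)
      (∫ s in A, (u₁ s - u₀ s) * exp (t * u₁ s + (1 - t) * u₀ s) ∂α) t := by
  have hu : ∀ t s, t * u₁ s + (1 - t) * u₀ s = u₀ s + t * (u₁ s - u₀ s) := fun _ _ => by ring
  have hexp₀ : IntegrableOn (fun s => exp (u₀ s)) A α := by
    simpa using integrableOn_exp_interpolate hm₀ hm₁ hb₀ hb₁ (left_mem_Icc.2 zero_le_one)
  unfold gibbsPartition
  simp only [hu]
  exact hasDerivAt_integral_exp_add_mul (f := fun s => u₁ s - u₀ s) (B := 2 * C) hexp₀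
    (hm₁.sub hm₀) (fun s => by linarith [abs_sub (u₁ s) (u₀ s), hb₀ s, hb₁ s]) t

theorem hasDerivAt_gibbsDensity [IsFiniteMeasure α] (hm₀ : Measurable u₀)
    (hm₁ : Measurable u₁) {C : ℝ} (hb₀ : ∀ s, |u₀ s| ≤ C) (hb₁ : ∀ s, |u₁ s| ≤ C) {t : ℝ}
    (hZ : gibbsPartition α A u₀ u₁ t ≠ 0) (s : S) :
    HasDerivAt (gibbsDensity α A u₀ u₁ · s)
      (gibbsDensity α A u₀ u₁ t s * (u₁ s - u₀ s - gibbsMean α A u₀ u₁ t)) t := by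
  have hZ' := hasDerivAt_gibbsPartition (α := α) (A := A) hm₀ hm₁ hb₀ hb₁ t
  by_cases hs : s ∈ A
  · have hexp : HasDerivAt (fun t => exp (t * u₁ s + (1 - t) * u₀ s))
        (exp (t * u₁ s + (1 - t) * u₀ s) * (u₁ s - u₀ s)) t := by
      exact ((((hasDerivAt_id t).mul_const (u₁ s)).add
        (((hasDerivAt_id t).const_sub 1).mul_const (u₀ s))).congr_deriv (by ring)).exp
    simp only [gibbsDensity, gibbsMean, indicator_of_mem hs]
    refine (hexp.div hZ' hZ).congr_deriv ?_
    field_simp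
  · simp only [gibbsDensity, indicator_of_notMem hs, zero_div, zero_mul]
    exact hasDerivAt_const t 0

theorem measurable_gibbsPartition [SFinite α] (hm₀ : Measurable u₀) (hm₁ : Measurable u₁) :
    Measurable (gibbsPartition α A u₀ u₁) :=
  StronglyMeasurable.measurable <| StronglyMeasurable.integral_prod_right'
    (f := fun p : ℝ × S => exp (p.1 * u₁ p.2 + (1 - p.1) * u₀ p.2)) (by fun_prop)

theorem measurable_gibbsMean [SFinite α] (hm₀ : Measurable u₀) (hm₁ : Measurable u₁) :
    Measurable (gibbsMean α A u₀ u₁) :=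
  (StronglyMeasurable.integral_prod_right' (ν := α.restrict A)
    (f := fun p : ℝ × S => (u₁ p.2 - u₀ p.2) * exp (p.1 * u₁ p.2 + (1 - p.1) * u₀ p.2))
    (by fun_prop)).measurable.div (measurable_gibbsPartition hm₀ hm₁)

theorem measurable_uncurry_gibbsDensity [SFinite α] (hA : MeasurableSet A) (hm₀ : Measurable u₀)
    (hm₁ : Measurable u₁) : Measurable (uncurry (gibbsDensity α A u₀ u₁)) := by
  have hZ := measurable_gibbsPartition (α := α) (A := A) hm₀ hm₁
  exact (Measurable.indicator (f := fun p : ℝ × S => exp (p.1 * u₁ p.2 + (1 - p.1) * u₀ p.2))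
    (by fun_prop) (measurable_snd hA)).div (hZ.comp measurable_fst)

theorem gibbsDensity_le {C : ℝ} (hb₀ : ∀ s, |u₀ s| ≤ C) (hb₁ : ∀ s, |u₁ s| ≤ C) {t : ℝ}
    (ht : t ∈ Icc (0 : ℝ) 1) (s : S) :
    gibbsDensity α A u₀ u₁ t s ≤ exp C / gibbsPartition α A u₀ u₁ t := by
  refine div_le_div_of_nonneg_right (indicator_apply_le' (fun _ => ?_) fun _ => (exp_pos C).le)
    (gibbsPartition_nonneg t)
  exact exp_le_exp.2 ((le_abs_self _).trans (abs_mul_add_one_sub_mul_le (hb₀ s) (hb₁ s) ht))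

theorem abs_gibbsMean_le [IsFiniteMeasure α] (hm₀ : Measurable u₀) (hm₁ : Measurable u₁) {C : ℝ}
    (hb₀ : ∀ s, |u₀ s| ≤ C) (hb₁ : ∀ s, |u₁ s| ≤ C) {t : ℝ} (ht : t ∈ Icc (0 : ℝ) 1)
    (hZ : 0 < gibbsPartition α A u₀ u₁ t) : |gibbsMean α A u₀ u₁ t| ≤ 2 * C := by
  rw [gibbsMean, abs_div, abs_of_pos hZ, div_le_iff₀ hZ, gibbsPartition, ← integral_const_mul,
    ← Real.norm_eq_abs]
  refine norm_integral_le_of_norm_le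
    ((integrableOn_exp_interpolate hm₀ hm₁ hb₀ hb₁ ht).const_mul _) (.of_forall fun s => ?_)
  rw [norm_mul, norm_of_nonneg (exp_pos _).le]
  gcongr
  rw [Real.norm_eq_abs]
  linarith [abs_sub (u₁ s) (u₀ s), hb₀ s, hb₁ s]

theorem abs_gibbsDensity_mul_sub_le [IsFiniteMeasure α] (hm₀ : Measurable u₀)
    (hm₁ : Measurable u₁) {C : ℝ} (hb₀ : ∀ s, |u₀ s| ≤ C) (hb₁ : ∀ s, |u₁ s| ≤ C) {m : ℝ}
    (hm : 0 < m) (hmZ : ∀ t ∈ Icc (0 : ℝ) 1, m ≤ gibbsPartition α A u₀ u₁ t) (t : ℝ)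
    (ht : t ∈ Icc (0 : ℝ) 1) (s : S) :
    |gibbsDensity α A u₀ u₁ t s * (u₁ s - u₀ s - gibbsMean α A u₀ u₁ t)| ≤
      exp C / m * (4 * C) := by
  rw [abs_mul, abs_of_nonneg (gibbsDensity_nonneg t s)]
  refine mul_le_mul ((gibbsDensity_le hb₀ hb₁ ht s).trans ?_) ?_ (abs_nonneg _) ?_
  · exact div_le_div_of_nonneg_left (exp_pos C).le hm (hmZ t ht)
  · linarith [abs_sub (u₁ s - u₀ s) (gibbsMean α A u₀ u₁ t), abs_sub (u₁ s) (u₀ s), hb₀ s,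
      hb₁ s, abs_gibbsMean_le hm₀ hm₁ hb₀ hb₁ ht (hm.trans_le (hmZ t ht))]
  · exact div_nonneg (exp_pos C).le hm.le

theorem integral_gibbsMeasure [SFinite α] (hA : MeasurableSet A)
    (hm₀ : Measurable u₀) (hm₁ : Measurable u₁) (t : ℝ) (g : S → ℝ) :
    ∫ s, g s ∂gibbsMeasure α A u₀ u₁ t =
      ∫ s, gibbsDensity α A u₀ u₁ t s * g s ∂α := by
  have hmeas : Measurable (gibbsDensity α A u₀ u₁ t) :=
    (measurable_uncurry_gibbsDensity hA hm₀ hm₁).comp measurable_prodMk_left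
  rw [gibbsMeasure, integral_withDensity_eq_integral_toReal_smul hmeas.ennreal_ofReal
    (.of_forall fun _ => ENNReal.ofReal_lt_top)]
  simp only [ENNReal.toReal_ofReal (gibbsDensity_nonneg _ _), smul_eq_mul]

theorem integral_gibbsDensity_mul_sub (hA : MeasurableSet A) (t : ℝ) :
    ∫ s, gibbsDensity α A u₀ u₁ t s * (u₁ s - u₀ s) ∂α = gibbsMean α A u₀ u₁ t := by
  have hind (s : S) : A.indicator (fun s' => exp (t * u₁ s' + (1 - t) * u₀ s')) s * (u₁ s - u₀ s)
      = A.indicator (fun s' => (u₁ s' - u₀ s') * exp (t * u₁ s' + (1 - t) * u₀ s')) s := by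
    by_cases hs : s ∈ A <;> simp [hs, mul_comm]
  simp only [gibbsDensity, div_mul_eq_mul_div, hind]
  rw [integral_div, integral_indicator hA, gibbsMean]

end

theorem stmt_9 {S : Type*} [MeasurableSpace S] (α : Measure S) [IsFiniteMeasure α]
    (u₀ u₁ : S → ℝ) (hm₀ : Measurable u₀) (hm₁ : Measurable u₁)
    (C : ℝ) (hb₀ : ∀ s, |u₀ s| ≤ C) (hb₁ : ∀ s, |u₁ s| ≤ C)
    (A : Set S) (hA : MeasurableSet A)
    (hZ : ∀ t ∈ Set.Icc (0 : ℝ) 1,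
      0 < ∫ s in A, Real.exp (t * u₁ s + (1 - t) * u₀ s) ∂α) :
    let f : S → ℝ := fun s => u₁ s - u₀ s
    let h : ℝ → S → ℝ := fun t s =>
      A.indicator (fun s' => Real.exp (t * u₁ s' + (1 - t) * u₀ s')) s /
        ∫ s' in A, Real.exp (t * u₁ s' + (1 - t) * u₀ s') ∂α
    let lam : ℝ → Measure S := fun t => α.withDensity (fun s => ENNReal.ofReal (h t s))
    ∫ s, |h 1 s - h 0 s| ∂α ≤
      ∫ t in (0 : ℝ)..1, ∫ σ, |f σ - ∫ τ, f τ ∂(lam t)| ∂(lam t) := by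
  show ∫ s, |gibbsDensity α A u₀ u₁ 1 s - gibbsDensity α A u₀ u₁ 0 s| ∂α ≤
    ∫ t in (0 : ℝ)..1, ∫ σ, |u₁ σ - u₀ σ - ∫ τ, u₁ τ - u₀ τ ∂gibbsMeasure α A u₀ u₁ t|
      ∂gibbsMeasure α A u₀ u₁ t
  have hZ' := hasDerivAt_gibbsPartition (α := α) (A := A) hm₀ hm₁ hb₀ hb₁
  obtain ⟨t₀, ht₀, hmin⟩ := isCompact_Icc.exists_isMinOn (nonempty_Icc.2 zero_le_one)
    (continuous_iff_continuousAt.2 fun t => (hZ' t).continuousAt).continuousOn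
  have hmeas : Measurable fun p : ℝ × S =>
      gibbsDensity α A u₀ u₁ p.1 p.2 * (u₁ p.2 - u₀ p.2 - gibbsMean α A u₀ u₁ p.1) :=
    (measurable_uncurry_gibbsDensity hA hm₀ hm₁).mul (by
      have := measurable_gibbsMean (α := α) (A := A) hm₀ hm₁
      fun_prop)
  refine (integral_abs_sub_le_intervalIntegral_of_hasDerivAt zero_le_one
    (fun s t ht => hasDerivAt_gibbsDensity hm₀ hm₁ hb₀ hb₁ (hZ t ht).ne' s) hmeas
    (abs_gibbsDensity_mul_sub_le hm₀ hm₁ hb₀ hb₁ (hZ t₀ ht₀) fun _ ht => hmin ht)).trans_eq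
    (intervalIntegral.integral_congr fun t _ => ?_)
  simp only [integral_gibbsMeasure hA hm₀ hm₁, integral_gibbsDensity_mul_sub hA, abs_mul,
    abs_of_nonneg (gibbsDensity_nonneg _ _)]
end

section
/- For any probability measure λ on a measurable space and bounded measurable f with values in [a,b], one has the mean absolute deviation bound ∫ |f − ∫f dλ| dλ ≤ (b−a)/2. -/
/-!
Mean absolute deviation is controlled by the standard deviation: the variance of `|f - ∫ f|` is
nonnegative, so `(∫ |f - ∫ f|)² ≤ ∫ (f - ∫ f)² = Var f`. Popoviciu's inequality bounds the
variance of a function with values in `[a, b]` by `((b - a) / 2)²`.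
-/

open MeasureTheory ProbabilityTheory

namespace ProbabilityTheory

variable {Ω : Type*} [MeasurableSpace Ω] {μ : Measure Ω} [IsProbabilityMeasure μ] {X : Ω → ℝ}

lemma sq_integral_abs_sub_le_variance (hX : MemLp X 2 μ) :
    (∫ ω, |X ω - μ[X]| ∂μ) ^ 2 ≤ Var[X; μ] := by
  have hdev : MemLp (fun ω ↦ |X ω - μ[X]|) 2 μ := (hX.sub (memLp_const (∫ ω, X ω ∂μ))).abs
  have hsq : μ[(fun ω ↦ |X ω - μ[X]|) ^ 2] = Var[X; μ] := by
    rw [variance_eq_integral hX.aemeasurable]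
    simp only [Pi.pow_apply, sq_abs]
  have hvar := variance_nonneg (fun ω ↦ |X ω - μ[X]|) μ
  rw [variance_eq_sub hdev, hsq] at hvar
  linarith

lemma integral_abs_sub_integral_le_of_bounded {a b : ℝ} (h : ∀ᵐ ω ∂μ, X ω ∈ Set.Icc a b)
    (hX : AEMeasurable X μ) :
    ∫ ω, |X ω - μ[X]| ∂μ ≤ (b - a) / 2 := by
  obtain ⟨ω, hωa, hωb⟩ := h.exists
  have hsq : (∫ ω, |X ω - μ[X]| ∂μ) ^ 2 ≤ ((b - a) / 2) ^ 2 :=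
    (sq_integral_abs_sub_le_variance (memLp_of_bounded h hX.aestronglyMeasurable 2)).trans
      (variance_le_sq_of_bounded h hX)
  exact (abs_le_of_sq_le_sq hsq (by linarith)).trans' (le_abs_self _)

end ProbabilityTheory

theorem stmt_11 {S : Type*} [MeasurableSpace S] (lam : Measure S) [IsProbabilityMeasure lam]
    (f : S → ℝ) (hf : Measurable f) (a b : ℝ) (hab : ∀ x, f x ∈ Set.Icc a b) :
    ∫ σ, |f σ - ∫ τ, f τ ∂lam| ∂lam ≤ (b - a) / 2 :=
  integral_abs_sub_integral_le_of_bounded (ae_of_all _ hab) hf.aemeasurable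
end

section
/- For two probability densities h₀ = e^{u₀}/Z₀ and h₁ = e^{u₁}/Z₁ on a probability space (S, α) (with u₀, u₁ bounded measurable, Z_i = ∫ e^{u_i} dα), if the oscillation of u₁ − u₀ satisfies osc(u₁−u₀) ≤ ε, then ∫ |h₁ − h₀| dα ≤ ε/2. -/
/-! Write `h₁ = h₀ e^g` with `g = u₁ - u₀ + log (Z₀ / Z₁)`. Then `g` takes values in an interval
`[a, b]` of length `ε`, and since both densities are normalized, `a ≤ 0 ≤ b`. On
`[e^a - 1, e^b - 1]` the convex function `|y|` lies below its chord, an affine function `λ y + κ`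
with `κ = 2AB / (A + B)`, where `A = e^b - 1` and `B = 1 - e^a`. Integrating this bound against
`h₀` kills the linear part, because `∫ h₀ (e^g - 1) = 0`. What remains is the inequality
`4AB ≤ (b - a)(A + B)`, which AM-GM reduces to `tanh (t / 2) ≤ t / 2`. -/

open MeasureTheory Real Set

-- equivalently `tanh (t / 2) ≤ t / 2`
lemma two_mul_exp_sub_one_le {t : ℝ} (ht : 0 ≤ t) : 2 * (exp t - 1) ≤ t * (exp t + 1) := by
  have hmono : Monotone fun t : ℝ => t * (exp t + 1) - 2 * (exp t - 1) := by
    refine monotone_of_hasDerivAt_nonneg (f' := fun t => (t - 1) * exp t + 1)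
      (fun t => (((hasDerivAt_id' t).mul ((hasDerivAt_exp t).add_const 1)).sub
        (((hasDerivAt_exp t).sub_const 1).const_mul 2)).congr_deriv (by ring)) (fun t => ?_)
    have h := one_sub_le_exp_neg t
    have h2 : exp (-t) * exp t = 1 := by rw [← exp_add, neg_add_cancel, exp_zero]
    show 0 ≤ (t - 1) * exp t + 1
    nlinarith [exp_pos t]
  simpa using hmono ht

lemma four_mul_exp_sub_one_mul_one_sub_exp_le {a b : ℝ} (ha : a ≤ 0) (hb : 0 ≤ b) :
    4 * (exp b - 1) * (1 - exp a) ≤ (b - a) * (exp b - exp a) := by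
  have key := two_mul_exp_sub_one_le (t := (b - a) / 2) (by linarith)
  set p := exp (b / 2)
  set q := exp (a / 2)
  have hp : exp b = p ^ 2 := by rw [← exp_nat_mul]; ring_nf
  have hq : exp a = q ^ 2 := by rw [← exp_nat_mul]; ring_nf
  have hpq : exp ((b - a) / 2) * q = p := by rw [← exp_add]; congr 1; ring
  have hq0 : 0 < q := exp_pos _
  have hqp : q ≤ p := exp_le_exp.2 (by linarith)
  have hlin : 2 * (p - q) ≤ (b - a) / 2 * (p + q) := by
    have := mul_le_mul_of_nonneg_right key hq0.le
    nlinarith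
  rw [hp, hq]
  nlinarith [sq_nonneg (p * q - 1), mul_le_mul_of_nonneg_left hlin (by linarith : 0 ≤ 2 * (p - q))]

lemma exists_abs_exp_sub_one_le {a b : ℝ} (ha : a ≤ 0) (hb : 0 ≤ b) :
    ∃ l : ℝ, ∀ x ∈ Icc a b, |exp x - 1| ≤ l * (exp x - 1) + (b - a) / 2 := by
  rcases (ha.trans hb).eq_or_lt with rfl | hab
  · refine ⟨0, fun x hx => ?_⟩
    obtain rfl : x = 0 := by linarith [hx.1, hx.2]
    simp
  set A := exp b - 1
  set B := 1 - exp a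
  have hAB : 0 < A + B := by simp only [A, B]; linarith [exp_lt_exp.2 hab]
  refine ⟨(A - B) / (A + B), fun x hx => ?_⟩
  have chord : (A + B) * |exp x - 1| ≤ (A - B) * (exp x - 1) + 2 * A * B := by
    have hA : exp x - 1 ≤ A := by simp only [A]; linarith [exp_le_exp.2 hx.2]
    have hB : -B ≤ exp x - 1 := by simp only [B]; linarith [exp_le_exp.2 hx.1]
    have hA0 : 0 ≤ A := by simp only [A]; linarith [one_le_exp hb]
    have hB0 : 0 ≤ B := by simp only [B]; linarith [exp_le_one_iff.2 ha]
    rcases abs_cases (exp x - 1) with ⟨h, -⟩ | ⟨h, -⟩ <;> rw [h] <;> nlinarith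
  have key : 4 * A * B ≤ (b - a) * (A + B) := by
    have := four_mul_exp_sub_one_mul_one_sub_exp_le ha hb
    simp only [A, B] at *; linarith
  refine le_of_mul_le_mul_left ?_ hAB
  rw [mul_add, ← mul_assoc, mul_div_cancel₀ _ hAB.ne']
  nlinarith

section

variable {S : Type*} [MeasurableSpace S] {μ : Measure S}

lemma integrable_exp_of_le [IsFiniteMeasure μ] {u : S → ℝ} (hu : Measurable u) {C : ℝ}
    (hC : ∀ s, u s ≤ C) : Integrable (fun s => exp (u s)) μ :=
  .of_bound hu.exp.aestronglyMeasurable (exp C) <| .of_forall fun s => by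
    rw [norm_of_nonneg (exp_pos _).le]; exact exp_le_exp.2 (hC s)

theorem integral_abs_mul_exp_sub_le {w g : S → ℝ} {a b : ℝ} (hw : ∀ s, 0 ≤ w s)
    (hw_int : Integrable w μ) (hwg_int : Integrable (fun s => w s * exp (g s)) μ)
    (hw_one : ∫ s, w s ∂μ = 1) (hwg_one : ∫ s, w s * exp (g s) ∂μ = 1)
    (hg : ∀ s, g s ∈ Icc a b) :
    ∫ s, |w s * exp (g s) - w s| ∂μ ≤ (b - a) / 2 := by
  have ha : exp a ≤ 1 := calc
    exp a = ∫ s, w s * exp a ∂μ := by rw [integral_mul_const, hw_one, one_mul]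
    _ ≤ ∫ s, w s * exp (g s) ∂μ := integral_mono (hw_int.mul_const _) hwg_int fun s =>
      mul_le_mul_of_nonneg_left (exp_le_exp.2 (hg s).1) (hw s)
    _ = 1 := hwg_one
  have hb : 1 ≤ exp b := calc
    1 = ∫ s, w s * exp (g s) ∂μ := hwg_one.symm
    _ ≤ ∫ s, w s * exp b ∂μ := integral_mono hwg_int (hw_int.mul_const _) fun s =>
      mul_le_mul_of_nonneg_left (exp_le_exp.2 (hg s).2) (hw s)
    _ = exp b := by rw [integral_mul_const, hw_one, one_mul]
  obtain ⟨l, hl⟩ := exists_abs_exp_sub_one_le (exp_le_one_iff.1 ha) (one_le_exp_iff.1 hb)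
  have hD : Integrable (fun s => w s * exp (g s) - w s) μ := hwg_int.sub hw_int
  have hbound : Integrable (fun s => l * (w s * exp (g s) - w s) + (b - a) / 2 * w s) μ :=
    (hD.const_mul l).add (hw_int.const_mul _)
  calc ∫ s, |w s * exp (g s) - w s| ∂μ
      ≤ ∫ s, (l * (w s * exp (g s) - w s) + (b - a) / 2 * w s) ∂μ := by
        refine integral_mono hD.abs hbound fun s => ?_
        have := mul_le_mul_of_nonneg_left (hl (g s) (hg s)) (hw s)
        rw [← mul_sub_one, abs_mul, abs_of_nonneg (hw s)]
        linarith
    _ = (b - a) / 2 := by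
        rw [integral_add (hD.const_mul l) (hw_int.const_mul _), integral_const_mul,
          integral_const_mul, integral_sub hwg_int hw_int, hwg_one, hw_one]
        ring

end

lemma exists_forall_mem_Icc_of_forall_sub_le {ι : Type*} [Nonempty ι] {f : ι → ℝ} {ε : ℝ}
    (h : ∀ x y, f x - f y ≤ ε) : ∃ m, ∀ x, f x ∈ Icc (m - ε) m := by
  obtain ⟨x₀⟩ := ‹Nonempty ι›
  have hbdd : BddAbove (range f) := ⟨f x₀ + ε, by rintro _ ⟨y, rfl⟩; linarith [h y x₀]⟩
  refine ⟨⨆ x, f x, fun x => ⟨?_, le_ciSup hbdd x⟩⟩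
  linarith [ciSup_le fun y => (by linarith [h y x] : f y ≤ f x + ε)]

theorem stmt_15 {S : Type*} [MeasurableSpace S] (α : Measure S) [IsProbabilityMeasure α]
    (u₀ u₁ : S → ℝ) (hm₀ : Measurable u₀) (hm₁ : Measurable u₁)
    (C : ℝ) (hb₀ : ∀ s, |u₀ s| ≤ C) (hb₁ : ∀ s, |u₁ s| ≤ C)
    (ε : ℝ) (hosc : ∀ x y, (u₁ x - u₀ x) - (u₁ y - u₀ y) ≤ ε) :
    ∫ s, |Real.exp (u₁ s) / (∫ s', Real.exp (u₁ s') ∂α)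
          - Real.exp (u₀ s) / (∫ s', Real.exp (u₀ s') ∂α)| ∂α ≤ ε / 2 := by
  have := nonempty_of_isProbabilityMeasure α
  obtain ⟨m, hm⟩ := exists_forall_mem_Icc_of_forall_sub_le hosc
  have hint₀ := integrable_exp_of_le (μ := α) hm₀ fun s => (abs_le.1 (hb₀ s)).2
  have hint₁ := integrable_exp_of_le (μ := α) hm₁ fun s => (abs_le.1 (hb₁ s)).2
  set Z₀ := ∫ s, exp (u₀ s) ∂α
  set Z₁ := ∫ s, exp (u₁ s) ∂α
  have hZ₀ : 0 < Z₀ := integral_exp_pos hint₀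
  have hZ₁ : 0 < Z₁ := integral_exp_pos hint₁
  set c := log (Z₀ / Z₁)
  have hdens : ∀ s, exp (u₀ s) / Z₀ * exp (u₁ s - u₀ s + c) = exp (u₁ s) / Z₁ := fun s => by
    rw [exp_add, exp_sub, exp_log (div_pos hZ₀ hZ₁)]
    field_simp
  have key := integral_abs_mul_exp_sub_le (μ := α) (w := fun s => exp (u₀ s) / Z₀)
    (g := fun s => u₁ s - u₀ s + c) (a := m - ε + c) (b := m + c)
    (fun s => by positivity) (hint₀.div_const Z₀)
    (by simpa only [hdens] using hint₁.div_const Z₁) (by rw [integral_div, div_self hZ₀.ne'])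
    (by simp only [hdens]; rw [integral_div, div_self hZ₁.ne'])
    (fun s => ⟨by linarith [(hm s).1], by linarith [(hm s).2]⟩)
  simp only [hdens] at key
  linarith
end
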